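/- arXiv:2007.06138 — 10 statements merged into one kernel-verified Lean document; each statement's English description precedes it below -/
import Mathlib

section
/- Let λ ∈ ℝ and let D : [0,∞) → ℝ be continuously differentiable. Then the following are equivalent: (i) for all u, t ≥ 0, −D'(u+t) ≤ e^{−2λt}·(−D'(u)); (ii) for all u, s, t ≥ 0, D(u+t) − D(u+s+t) ≤ e^{−2λt}·(D(u) − D(u+s)). -/
/-! Fix `u, t ≥ 0` and compare the two sides of the entropy-difference inequality through
`g(s) = e^{-2λt}(D u - D(u+s)) - (D(u+t) - D(u+s+t))`, which vanishes at `s = 0` and has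
derivative `g'(s) = e^{-2λt}(-D'(u+s)) - (-D'(u+s+t))`. Fisher monotonicity at the base point
`u + s` says exactly `g'(s) ≥ 0`, so `g` is monotone and hence nonnegative; conversely, if `g ≥ 0`
then `s = 0` is a minimum of `g` on `[0,∞)`, which forces the one-sided derivative `g'(0) ≥ 0`. -/

open Set

theorem IsLocalMinOn.hasDerivWithinAt_Ici_nonneg {f : ℝ → ℝ} {a f' : ℝ}
    (h : IsLocalMinOn f (Ici a) a) (hf : HasDerivWithinAt f f' (Ici a) a) : 0 ≤ f' := by
  have hone : (1 : ℝ) ∈ posTangentConeAt (Ici a) a :=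
    mem_posTangentConeAt_of_segment_subset (by
      rw [segment_eq_Icc (by linarith)]
      exact Icc_subset_Ici_self)
  simpa using h.hasFDerivWithinAt_nonneg hf hone

section EntropyDecay

variable (lam : ℝ) (D D' : ℝ → ℝ)

noncomputable def entropyDecayGap (u t s : ℝ) : ℝ :=
  Real.exp (-2 * lam * t) * (D u - D (u + s)) - (D (u + t) - D (u + s + t))

theorem entropyDecayGap_nonneg_iff {u t s : ℝ} :
    0 ≤ entropyDecayGap lam D u t s ↔
      D (u + t) - D (u + s + t) ≤ Real.exp (-2 * lam * t) * (D u - D (u + s)) :=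
  sub_nonneg

variable {D D'}

theorem hasDerivWithinAt_comp_const_add_Ici
    (hderiv : ∀ t ∈ Ici (0 : ℝ), HasDerivWithinAt D (D' t) (Ici 0) t)
    {a s : ℝ} (ha : 0 ≤ a) (hs : 0 ≤ s) :
    HasDerivWithinAt (fun s => D (a + s)) (D' (a + s)) (Ici 0) s := by
  have hmaps : MapsTo (fun s : ℝ => a + s) (Ici 0) (Ici 0) :=
    fun x hx => add_nonneg ha hx
  simpa [Function.comp_def] using (hderiv (a + s) (add_nonneg ha hs)).comp s
    ((hasDerivWithinAt_id s (Ici 0)).const_add a) hmaps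

theorem hasDerivWithinAt_entropyDecayGap
    (hderiv : ∀ t ∈ Ici (0 : ℝ), HasDerivWithinAt D (D' t) (Ici 0) t)
    {u t s : ℝ} (hu : 0 ≤ u) (ht : 0 ≤ t) (hs : 0 ≤ s) :
    HasDerivWithinAt (entropyDecayGap lam D u t)
      (Real.exp (-2 * lam * t) * (-D' (u + s)) - (-D' (u + s + t))) (Ici 0) s := by
  have hbase := hasDerivWithinAt_comp_const_add_Ici hderiv hu hs
  have hshift : HasDerivWithinAt (fun s => D (u + s + t)) (D' (u + s + t)) (Ici 0) s := by
    convert hasDerivWithinAt_comp_const_add_Ici hderiv (add_nonneg hu ht) hs using 1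
    · funext x
      rw [add_right_comm]
    · rw [add_right_comm]
  exact (((hbase.const_sub (D u)).const_mul (Real.exp (-2 * lam * t))).sub
    (hshift.const_sub (D (u + t)))).congr_deriv (by ring)

theorem entropyDecayGap_nonneg_of_fisher
    (hderiv : ∀ t ∈ Ici (0 : ℝ), HasDerivWithinAt D (D' t) (Ici 0) t)
    (hfisher : ∀ u ≥ (0 : ℝ), ∀ t ≥ (0 : ℝ),
      -D' (u + t) ≤ Real.exp (-2 * lam * t) * (-D' u))
    {u t s : ℝ} (hu : 0 ≤ u) (ht : 0 ≤ t) (hs : 0 ≤ s) :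
    0 ≤ entropyDecayGap lam D u t s := by
  have hmono : MonotoneOn (entropyDecayGap lam D u t) (Ici 0) := by
    refine monotoneOn_of_hasDerivWithinAt_nonneg (convex_Ici 0)
      (f' := fun s => Real.exp (-2 * lam * t) * (-D' (u + s)) - (-D' (u + s + t)))
      (fun x hx => (hasDerivWithinAt_entropyDecayGap lam hderiv hu ht hx).continuousWithinAt)
      ?_ ?_ <;> rw [interior_Ici] <;> intro x hx
    · exact (hasDerivWithinAt_entropyDecayGap lam hderiv hu ht hx.le).mono Ioi_subset_Ici_self
    · exact sub_nonneg.mpr (hfisher (u + x) (add_nonneg hu hx.le) t ht)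
  simpa [entropyDecayGap] using hmono self_mem_Ici hs hs

theorem fisher_of_entropyDecayGap_nonneg
    (hderiv : ∀ t ∈ Ici (0 : ℝ), HasDerivWithinAt D (D' t) (Ici 0) t)
    {u t : ℝ} (hu : 0 ≤ u) (ht : 0 ≤ t)
    (hgap : ∀ s ≥ (0 : ℝ), 0 ≤ entropyDecayGap lam D u t s) :
    -D' (u + t) ≤ Real.exp (-2 * lam * t) * (-D' u) := by
  have hmin : IsMinOn (entropyDecayGap lam D u t) (Ici 0) 0 :=
    isMinOn_iff.mpr fun s hs => by simpa [entropyDecayGap] using hgap s hs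
  have hderiv0 := hmin.localize.hasDerivWithinAt_Ici_nonneg
    (hasDerivWithinAt_entropyDecayGap lam hderiv hu ht le_rfl)
  simpa only [add_zero, sub_nonneg] using hderiv0

end EntropyDecay

theorem fisher_monotonicity_iff_entropy_difference_decay_general
    (lam : ℝ) (D D' : ℝ → ℝ)
    (hderiv : ∀ t ∈ Set.Ici (0 : ℝ), HasDerivWithinAt D (D' t) (Set.Ici 0) t) :
    (∀ u ≥ (0 : ℝ), ∀ t ≥ (0 : ℝ),
        -D' (u + t) ≤ Real.exp (-2 * lam * t) * (-D' u)) ↔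
    (∀ u ≥ (0 : ℝ), ∀ s ≥ (0 : ℝ), ∀ t ≥ (0 : ℝ),
        D (u + t) - D (u + s + t) ≤ Real.exp (-2 * lam * t) * (D u - D (u + s))) := by
  constructor
  · intro hfisher u hu s hs t ht
    exact (entropyDecayGap_nonneg_iff lam D).mp
      (entropyDecayGap_nonneg_of_fisher lam hderiv hfisher hu ht hs)
  · intro hdecay u hu t ht
    exact fisher_of_entropyDecayGap_nonneg lam hderiv hu ht fun s hs =>
      (entropyDecayGap_nonneg_iff lam D).mpr (hdecay u hu s hs t ht)

/-- The real-analytic core of Proposition 3.1: for a continuously differentiable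
`D : [0,∞) → ℝ`, λ-Fisher monotonicity `-D'(u+t) ≤ e^{-2λt}·(-D'(u))` is equivalent
to the shifted entropy-difference decay
`D(u+t) - D(u+s+t) ≤ e^{-2λt}·(D(u) - D(u+s))`. -/
theorem fisher_monotonicity_iff_entropy_difference_decay
    (lam : ℝ) (D D' : ℝ → ℝ)
    (hderiv : ∀ t ∈ Set.Ici (0 : ℝ), HasDerivWithinAt D (D' t) (Set.Ici 0) t)
    (hcont : ContinuousOn D' (Set.Ici 0)) :
    (∀ u ≥ (0 : ℝ), ∀ t ≥ (0 : ℝ),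
        -D' (u + t) ≤ Real.exp (-2 * lam * t) * (-D' u)) ↔
    (∀ u ≥ (0 : ℝ), ∀ s ≥ (0 : ℝ), ∀ t ≥ (0 : ℝ),
        D (u + t) - D (u + s + t) ≤ Real.exp (-2 * lam * t) * (D u - D (u + s))) :=
  fisher_monotonicity_iff_entropy_difference_decay_general lam D D' hderiv
end

section
/- Let λ ∈ ℝ, t₀ > 0, and let D : [0,∞) → [0,∞) be differentiable at 0 from the right. Assume (a) D(t) − D(s+t) ≤ e^{−2λt}·(D(0) − D(s)) for all s, t ≥ 0, and (b) D(t₀) ≤ D(0)/2. Then −D'(0) ≥ 2·κ(λ,t₀)·D(0), where κ(λ,t) = 1/(4t) if λ = 0 and κ(λ,t) = λ/(2(1−e^{−2λt})) if λ ≠ 0. -/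
/-!
With `h = t₀/N`, telescoping `D 0 - D t₀` along `0, h, …, N h` and bounding each step by (a)
gives `D 0 / 2 ≤ (∑_{j<N} e^{-2λjh}) (D 0 - D h)`, i.e.
`D 0 ≤ 2 (h ∑_{j<N} e^{-2λjh}) ((D 0 - D h) / h)`. As `N → ∞` the Riemann sum tends to
`∫₀^{t₀} e^{-2λs} ds` and the difference quotient to `-D'(0)`; the constant `2κ(λ,t₀)` is
the reciprocal of twice that integral.
-/

open Filter Finset Real Topology

/-- `∫₀ᵗ e^{cs} ds`, the limit of the Riemann sums `h ∑_{j<N} e^{cjh}` with `N h = t`. -/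
noncomputable def expIntegral (c t : ℝ) : ℝ :=
  if c = 0 then t else (exp (c * t) - 1) / c

lemma expIntegral_pos (c : ℝ) {t : ℝ} (ht : 0 < t) : 0 < expIntegral c t := by
  unfold expIntegral
  split_ifs with hc
  · exact ht
  rcases Ne.lt_or_gt hc with hc | hc
  · exact div_pos_of_neg_of_neg (by simpa using mul_neg_of_neg_of_pos hc ht) hc
  · exact div_pos (by simpa using mul_pos hc ht) hc

lemma inv_two_mul_expIntegral {lam t : ℝ} (ht : t ≠ 0) :
    (2 * expIntegral (-2 * lam) t)⁻¹ =
      2 * (if lam = 0 then 1 / (4 * t) else lam / (2 * (1 - exp (-2 * lam * t)))) := by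
  simp only [expIntegral, mul_eq_zero, OfNat.ofNat_ne_zero, neg_eq_zero, false_or]
  split_ifs with hl
  · field_simp; ring
  have hE : exp (-2 * lam * t) ≠ 1 := by rw [Ne, exp_eq_one_iff]; simp [hl, ht]
  generalize exp (-2 * lam * t) = E at hE ⊢
  have hE₁ : E - 1 ≠ 0 := sub_ne_zero.2 hE
  have hE₂ : 1 - E ≠ 0 := sub_ne_zero.2 hE.symm
  field_simp
  ring

lemma tendsto_div_nat_add_one (t : ℝ) : Tendsto (fun n : ℕ => t / (n + 1)) atTop (𝓝 0) := by
  simpa [div_eq_mul_inv] using (tendsto_one_div_add_atTop_nhds_zero_nat (𝕜 := ℝ)).const_mul t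

lemma tendsto_mul_sum_exp_mul (c t : ℝ) :
    Tendsto (fun n : ℕ => t / (n + 1) * ∑ j ∈ range (n + 1), exp (c * (j * (t / (n + 1)))))
      atTop (𝓝 (expIntegral c t)) := by
  have hgeom (n j : ℕ) : exp (c * (j * (t / (n + 1)))) = exp (c * (t / (n + 1))) ^ j := by
    rw [← exp_nat_mul]; ring_nf
  simp only [hgeom]
  rcases eq_or_ne c 0 with rfl | hc
  · refine tendsto_const_nhds.congr fun n => ?_
    simp only [expIntegral, zero_mul, exp_zero, one_pow, sum_const, card_range, nsmul_eq_mul]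
    push_cast
    field_simp
  rcases eq_or_ne t 0 with rfl | ht
  · simp [expIntegral]
  have hslope : Tendsto (fun h => h⁻¹ * (exp (c * h) - 1)) (𝓝[≠] 0) (𝓝 c) := by
    simpa using ((hasDerivAt_id (0 : ℝ)).const_mul c).exp.tendsto_slope_zero
  have hh : Tendsto (fun n : ℕ => t / (n + 1)) atTop (𝓝[≠] 0) :=
    tendsto_nhdsWithin_iff.2 ⟨tendsto_div_nat_add_one t,
      Eventually.of_forall fun n => div_ne_zero ht (by positivity)⟩
  rw [expIntegral, if_neg hc, div_eq_mul_inv]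
  refine ((hslope.comp hh).inv₀ hc |>.const_mul (exp (c * t) - 1)).congr fun n => ?_
  have hr : exp (c * (t / (n + 1))) ≠ 1 := by
    rw [Ne, exp_eq_one_iff]; exact mul_ne_zero hc (div_ne_zero ht (by positivity))
  rw [geom_sum_eq hr, ← exp_nat_mul, Function.comp_apply]
  push_cast
  field_simp

lemma sub_le_sum_mul_of_forall_sub_le {D w : ℝ → ℝ}
    (hD : ∀ s ≥ (0 : ℝ), ∀ t ≥ (0 : ℝ), D t - D (s + t) ≤ w t * (D 0 - D s))
    {h : ℝ} (hh : 0 ≤ h) (N : ℕ) :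
    D 0 - D (N * h) ≤ (∑ j ∈ range N, w (j * h)) * (D 0 - D h) := by
  induction N with
  | zero => simp
  | succ N ih =>
    have hstep := hD h hh (N * h) (by positivity)
    rw [sum_range_succ, add_mul, Nat.cast_succ, add_one_mul, add_comm (N * h) h]
    linarith

theorem fisher_monotone_and_half_decay_implies_mlsi_general
    (lam t₀ : ℝ) (ht₀ : 0 < t₀) (D : ℝ → ℝ) (D'0 : ℝ)
    (hderiv : HasDerivWithinAt D D'0 (Set.Ici 0) 0)
    (hFM : ∀ s ≥ (0 : ℝ), ∀ t ≥ (0 : ℝ),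
        D t - D (s + t) ≤ Real.exp (-2 * lam * t) * (D 0 - D s))
    (hhalf : D t₀ ≤ D 0 / 2) :
    -D'0 ≥ 2 * (if lam = 0 then 1 / (4 * t₀)
        else lam / (2 * (1 - Real.exp (-2 * lam * t₀)))) * D 0 := by
  set h : ℕ → ℝ := fun n => t₀ / (n + 1)
  have hh : Tendsto h atTop (𝓝[>] 0) := tendsto_nhdsWithin_iff.2
    ⟨tendsto_div_nat_add_one t₀, Eventually.of_forall fun n => Set.mem_Ioi.2 (by positivity)⟩
  have hdiscrete (n : ℕ) : D 0 ≤
      2 * (h n * ∑ j ∈ range (n + 1), exp (-2 * lam * (j * h n))) * -slope D 0 (h n) := by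
    have hpos : 0 < h n := by positivity
    have htel := sub_le_sum_mul_of_forall_sub_le hFM hpos.le (n + 1)
    rw [show ((n + 1 : ℕ) : ℝ) * h n = t₀ by simp [h]; field_simp] at htel
    rw [slope_def_field, sub_zero]
    set S := ∑ j ∈ range (n + 1), exp (-2 * lam * (j * h n))
    calc D 0 ≤ 2 * (S * (D 0 - D (h n))) := by linarith
      _ = _ := by field_simp; ring
  have hslope := ((hasDerivWithinAt_iff_tendsto_slope' Set.self_notMem_Ioi).1
    hderiv.Ioi_of_Ici).comp hh
  have hlimit : D 0 ≤ 2 * expIntegral (-2 * lam) t₀ * -D'0 :=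
    ge_of_tendsto (((tendsto_mul_sum_exp_mul (-2 * lam) t₀).const_mul 2).mul hslope.neg)
      (Eventually.of_forall hdiscrete)
  rw [← inv_two_mul_expIntegral ht₀.ne', ge_iff_le,
    inv_mul_le_iff₀ (mul_pos two_pos (expIntegral_pos _ ht₀))]
  exact hlimit

/-- The analytic core of the main Theorem 3.7 (λ-Fisher monotonicity plus finite cb-return
time implies κ(λ,t_cb)-MLSI): if `D : [0,∞) → [0,∞)` is differentiable at `0` from the
right, satisfies the difference-form Fisher monotonicity
`D(t) - D(s+t) ≤ e^{-2λt}·(D(0) - D(s))` and the half-decay `D(t₀) ≤ D(0)/2`, then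
`-D'(0) ≥ 2·κ(λ,t₀)·D(0)` with `κ(λ,t) = 1/(4t)` for `λ = 0` and
`κ(λ,t) = λ/(2(1-e^{-2λt}))` otherwise. -/
theorem fisher_monotone_and_half_decay_implies_mlsi
    (lam t₀ : ℝ) (ht₀ : 0 < t₀) (D : ℝ → ℝ) (D'0 : ℝ)
    (hnonneg : ∀ t ≥ (0 : ℝ), 0 ≤ D t)
    (hderiv : HasDerivWithinAt D D'0 (Set.Ici 0) 0)
    (hFM : ∀ s ≥ (0 : ℝ), ∀ t ≥ (0 : ℝ),
        D t - D (s + t) ≤ Real.exp (-2 * lam * t) * (D 0 - D s))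
    (hhalf : D t₀ ≤ D 0 / 2) :
    -D'0 ≥ 2 * (if lam = 0 then 1 / (4 * t₀)
        else lam / (2 * (1 - Real.exp (-2 * lam * t₀)))) * D 0 :=
  fisher_monotone_and_half_decay_implies_mlsi_general lam t₀ ht₀ D D'0 hderiv hFM hhalf
end

section
/- Let n ≥ 1, α ∈ [0,1], and let Φ be an n×n real matrix with nonnegative entries, all of whose row sums and column sums equal 1 (doubly stochastic), and with Φ_{ij} ≥ α/n for all i, j. Then for every probability vector p on {1,…,n} (p_i ≥ 0, ∑_i p_i = 1), ∑_i (Φp)_i · log(n·(Φp)_i) ≤ (1−α) · ∑_i p_i · log(n·p_i), where (Φp)_i = ∑_j Φ_{ij} p_j and 0·log 0 := 0. -/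
/-!
Write `Φ = α E + Ψ`, where `E` has all entries `1/n` and `Ψ ≥ 0` has all row and column sums
`1 - α`. Since `p` is a probability vector, `(Φp)_i = α · (1/n) + ∑_j Ψ_ij p_j` is a convex
combination, so Jensen's inequality for the convex function `f x = x log(n x)` bounds
`f((Φp)_i)` by `α f(1/n) + ∑_j Ψ_ij f(p_j)`. The first term vanishes, and summing over `i`
with the column sums of `Ψ` gives the factor `1 - α`.
-/

open Finset Real

lemma convexOn_mul_log_const_mul {c : ℝ} (hc : c ≠ 0) :
    ConvexOn ℝ (Set.Ici 0) (fun x => x * log (c * x)) := by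
  refine (convexOn_mul_log.add ((LinearMap.mulLeft ℝ (log c)).convexOn (convex_Ici 0))).congr ?_
  rintro x (hx : 0 ≤ x)
  rcases hx.eq_or_lt with rfl | hx
  · simp
  · simp only [Pi.add_apply, LinearMap.mulLeft_apply, log_mul hc hx.ne']
    ring

section UniformFloor

variable {ι : Type*} [Fintype ι]

lemma sum_sub_div_card {x : ι → ℝ} (hx : ∑ j, x j = 1) (a : ℝ) :
    ∑ j, (x j - a / Fintype.card ι) = 1 - a := by
  have : Nonempty ι := by
    by_contra hempty
    simp [not_nonempty_iff.mp hempty] at hx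
  rw [sum_sub_distrib, hx, sum_const, card_univ, nsmul_eq_mul,
    mul_div_cancel₀ _ (Nat.cast_ne_zero.2 Fintype.card_ne_zero)]

variable {f : ℝ → ℝ} {s : Set ℝ} {α : ℝ} {p : ι → ℝ}

lemma ConvexOn.map_sum_mul_le_of_uniform_floor (hf : ConvexOn ℝ s f) (hα : 0 ≤ α)
    {φ : ι → ℝ} (hφ : ∑ j, φ j = 1) (hdom : ∀ j, α / Fintype.card ι ≤ φ j)
    (hp : ∀ j, p j ∈ s) (hpsum : ∑ j, p j = 1) (hu : (Fintype.card ι : ℝ)⁻¹ ∈ s) :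
    f (∑ j, φ j * p j) ≤ α * f (Fintype.card ι)⁻¹ + ∑ j, (φ j - α / Fintype.card ι) * f (p j) := by
  have hsplit : ∑ j, φ j * p j =
      α * (Fintype.card ι : ℝ)⁻¹ + ∑ j, (φ j - α / Fintype.card ι) * p j := by
    simp only [sub_mul, sum_sub_distrib, ← mul_sum, hpsum]
    ring
  rw [hsplit]
  exact hf.map_add_sum_le (fun j _ => sub_nonneg.mpr (hdom j))
    (by rw [sum_sub_div_card hφ]; ring) (fun j _ => hp j) hα hu

lemma ConvexOn.sum_map_sum_mul_le_of_uniform_floor (hf : ConvexOn ℝ s f) (hα : 0 ≤ α)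
    {Φ : ι → ι → ℝ} (hrow : ∀ i, ∑ j, Φ i j = 1) (hcol : ∀ j, ∑ i, Φ i j = 1)
    (hdom : ∀ i j, α / Fintype.card ι ≤ Φ i j)
    (hp : ∀ j, p j ∈ s) (hpsum : ∑ j, p j = 1) (hu : (Fintype.card ι : ℝ)⁻¹ ∈ s) :
    ∑ i, f (∑ j, Φ i j * p j) ≤
      Fintype.card ι * (α * f (Fintype.card ι)⁻¹) + (1 - α) * ∑ j, f (p j) :=
  calc ∑ i, f (∑ j, Φ i j * p j)
      ≤ ∑ i, (α * f (Fintype.card ι)⁻¹ + ∑ j, (Φ i j - α / Fintype.card ι) * f (p j)) :=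
        sum_le_sum fun i _ =>
          hf.map_sum_mul_le_of_uniform_floor hα (hrow i) (hdom i) hp hpsum hu
    _ = Fintype.card ι * (α * f (Fintype.card ι)⁻¹) + (1 - α) * ∑ j, f (p j) := by
        simp only [sum_add_distrib, sum_const, card_univ, nsmul_eq_mul]
        rw [sum_comm]
        simp only [← sum_mul, sum_sub_div_card (hcol _), mul_sum]

end UniformFloor

open Finset in
theorem doubly_stochastic_entropy_contraction_general
    (n : ℕ) (α : ℝ) (hα0 : 0 ≤ α)
    (Φ : Fin n → Fin n → ℝ)
    (hrow : ∀ i, ∑ j, Φ i j = 1)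
    (hcol : ∀ j, ∑ i, Φ i j = 1)
    (hdom : ∀ i j, α / n ≤ Φ i j)
    (p : Fin n → ℝ) (hp : ∀ i, 0 ≤ p i) (hpsum : ∑ i, p i = 1) :
    ∑ i, (∑ j, Φ i j * p j) * Real.log (n * (∑ j, Φ i j * p j)) ≤
      (1 - α) * ∑ i, p i * Real.log (n * p i) := by
  have hn : (n : ℝ) ≠ 0 := by
    rintro hn
    rw [Nat.cast_eq_zero] at hn
    subst hn
    simp at hpsum
  have key := (convexOn_mul_log_const_mul hn).sum_map_sum_mul_le_of_uniform_floor hα0 hrow hcol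
    (by simpa using hdom) hp hpsum (by simp)
  simpa [hn] using key

open Finset in
/-- The classical ergodic instance of Lemma 3.6: a doubly stochastic matrix `Φ` with
entries `Φ i j ≥ α/n` contracts relative entropy to the uniform distribution by the
factor `1 - α`:  `∑ i (Φp)_i log(n·(Φp)_i) ≤ (1-α) ∑ i p_i log(n·p_i)`.
(In Lean, `Real.log 0 = 0`, so the convention `0·log 0 = 0` holds automatically.) -/
theorem doubly_stochastic_entropy_contraction
    (n : ℕ) (hn : 1 ≤ n) (α : ℝ) (hα0 : 0 ≤ α) (hα1 : α ≤ 1)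
    (Φ : Fin n → Fin n → ℝ)
    (hΦnonneg : ∀ i j, 0 ≤ Φ i j)
    (hrow : ∀ i, ∑ j, Φ i j = 1)
    (hcol : ∀ j, ∑ i, Φ i j = 1)
    (hdom : ∀ i j, α / n ≤ Φ i j)
    (p : Fin n → ℝ) (hp : ∀ i, 0 ≤ p i) (hpsum : ∑ i, p i = 1) :
    ∑ i, (∑ j, Φ i j * p j) * Real.log (n * (∑ j, Φ i j * p j)) ≤
      (1 - α) * ∑ i, p i * Real.log (n * p i) :=
  doubly_stochastic_entropy_contraction_general n α hα0 Φ hrow hcol hdom p hp hpsum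
end

section
/- The 3×3 diagonal matrix ρ = diag(3/2, 3/4, 3/4), which is a density for the normalized trace τ = Tr/3 on M₃(ℂ), satisfies D(1‖ρ) < D(ρ‖1), where D(a‖b) := τ(a·log a − a·log b); explicitly, (1/3)·log(32/27) < (1/2)·log(9/8). Consequently τ((ρ − 1)·log ρ) = D(ρ‖1) + D(1‖ρ) < 2·D(ρ‖1). -/
/-!
The logarithm of a real diagonal matrix is the diagonal matrix of the logarithms, and
`log 1 = 0`. Hence `τ((ρ - 1) log ρ)` splits as `D(ρ‖1) + D(1‖ρ)`, with
`D(ρ‖1) = ½ log(9/8)` and `D(1‖ρ) = ⅓ log(32/27)`; comparing these is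
`(32/27)² < (9/8)³`, i.e. `2¹⁹ < 3¹²`.
-/

open scoped ComplexOrder
open Matrix Polynomial

section

variable {n 𝕜 : Type*} [Fintype n] [DecidableEq n] [RCLike 𝕜]

theorem Matrix.spectrum_real_diagonal_ofReal (d : n → ℝ) :
    spectrum ℝ (diagonal fun i => (d i : 𝕜)) = Set.range d := by
  ext x
  rw [← spectrum.preimage_algebraMap 𝕜, Set.mem_preimage, spectrum_diagonal]
  simp [RCLike.algebraMap_eq_ofReal, eq_comm]

/-- On a real diagonal matrix, `f` agrees with a Lagrange interpolation polynomial on the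
spectrum, and polynomials act entrywise on diagonal matrices. -/
theorem Matrix.cfc_diagonal_ofReal (f : ℝ → ℝ) (d : n → ℝ) :
    cfc f (diagonal fun i => (d i : 𝕜)) = diagonal fun i => (f (d i) : 𝕜) := by
  set p := Lagrange.interpolate (Finset.univ.image d) id f
  have hp (i : n) : p.eval (d i) = f (d i) :=
    Lagrange.eval_interpolate_at_node f (Set.injOn_id _)
      (Finset.mem_image_of_mem d (Finset.mem_univ i))
  let φ : (n → ℝ) →ₐ[ℝ] Matrix n n 𝕜 := (diagonalAlgHom ℝ).comp ((Algebra.ofId ℝ 𝕜).compLeft n)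
  have hφ (e : n → ℝ) : φ e = diagonal fun i => (e i : 𝕜) := rfl
  have hherm : (diagonal fun i => (d i : 𝕜)).IsHermitian :=
    isHermitian_diagonal_iff.mpr fun i => RCLike.conj_ofReal (d i)
  calc cfc f (diagonal fun i => (d i : 𝕜))
      = cfc (fun x => p.eval x) (diagonal fun i => (d i : 𝕜)) := by
        refine cfc_congr fun x hx => ?_
        rw [spectrum_real_diagonal_ofReal] at hx
        obtain ⟨i, rfl⟩ := hx
        exact (hp i).symm
    _ = φ (aeval d p) := by rw [cfc_polynomial p _ hherm.isSelfAdjoint, ← hφ, aeval_algHom_apply]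
    _ = _ := by
        rw [hφ]
        congr! 2 with i
        rw [aeval_pi_apply₂, coe_aeval_eq_eval, hp]

theorem Matrix.cfc_log_one : cfc Real.log (1 : Matrix n n 𝕜) = 0 := by
  simp

theorem Matrix.trace_sub_one_mul_cfc_log (ρ : Matrix n n 𝕜) :
    ((ρ - 1) * cfc Real.log ρ).trace =
      (ρ * cfc Real.log ρ - ρ * cfc Real.log (1 : Matrix n n 𝕜)).trace +
        (1 * cfc Real.log (1 : Matrix n n 𝕜) - 1 * cfc Real.log ρ).trace := by
  simp only [cfc_log_one, sub_mul, trace_sub, mul_zero, one_mul, trace_zero]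
  ring

end

theorem Real.third_log_32_div_27_lt_half_log_9_div_8 :
    (1 / 3 : ℝ) * Real.log (32 / 27) < (1 / 2 : ℝ) * Real.log (9 / 8) := by
  have h := Real.log_lt_log (by positivity) (by norm_num : (32 / 27 : ℝ) ^ 2 < (9 / 8) ^ 3)
  rw [Real.log_pow, Real.log_pow] at h
  push_cast at h
  linarith

/-- Example 3.18: the density `ρ = diag(3/2, 3/4, 3/4)` for the normalized trace
`τ = Tr/3` on `M₃(ℂ)` satisfies `D(1‖ρ) < D(ρ‖1)` where
`D(a‖b) = τ(a·log a - a·log b)`; explicitly `(1/3)·log(32/27) < (1/2)·log(9/8)`.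
Consequently `τ((ρ - 1)·log ρ) = D(ρ‖1) + D(1‖ρ) < 2·D(ρ‖1)`, so the depolarizing
semigroup on `M₃` fails the 1-MLSI. -/
theorem depolarizing_M3_counterexample :
    ∀ ρ : Matrix (Fin 3) (Fin 3) ℂ,
      ρ = Matrix.diagonal ![3/2, 3/4, 3/4] →
      (((1 : Matrix (Fin 3) (Fin 3) ℂ) * cfc Real.log (1 : Matrix (Fin 3) (Fin 3) ℂ)
          - 1 * cfc Real.log ρ).trace / 3 <
        (ρ * cfc Real.log ρ - ρ * cfc Real.log (1 : Matrix (Fin 3) (Fin 3) ℂ)).trace / 3) ∧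
      ((1 / 3 : ℝ) * Real.log (32 / 27) < (1 / 2 : ℝ) * Real.log (9 / 8)) ∧
      (((ρ - 1) * cfc Real.log ρ).trace / 3 =
        (ρ * cfc Real.log ρ - ρ * cfc Real.log (1 : Matrix (Fin 3) (Fin 3) ℂ)).trace / 3
        + ((1 : Matrix (Fin 3) (Fin 3) ℂ) * cfc Real.log (1 : Matrix (Fin 3) (Fin 3) ℂ)
            - 1 * cfc Real.log ρ).trace / 3) ∧
      (((ρ - 1) * cfc Real.log ρ).trace / 3 <
        2 * ((ρ * cfc Real.log ρ
          - ρ * cfc Real.log (1 : Matrix (Fin 3) (Fin 3) ℂ)).trace / 3)) := by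
  intro ρ hρ
  set d : Fin 3 → ℝ := ![3/2, 3/4, 3/4]
  have hρd : ρ = diagonal fun i => (RCLike.ofReal (d i) : ℂ) := by
    rw [hρ]
    congr 1
    ext i
    fin_cases i <;> simp [d]
  have hlog₁ : Real.log (9 / 8) = Real.log (3 / 2) + Real.log (3 / 4) := by
    rw [← Real.log_mul (by norm_num) (by norm_num)]
    norm_num
  have hlog₂ : Real.log (32 / 27) = -(Real.log (3 / 2) + 2 * Real.log (3 / 4)) := by
    rw [two_mul, ← Real.log_mul (by norm_num) (by norm_num),
      ← Real.log_mul (by norm_num) (by norm_num), ← Real.log_inv]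
    norm_num
  have hD₁ : (ρ * cfc Real.log ρ - ρ * cfc Real.log (1 : Matrix (Fin 3) (Fin 3) ℂ)).trace / 3 =
      ((1 / 2 * Real.log (9 / 8) : ℝ) : ℂ) := by
    rw [cfc_log_one, hρd, cfc_diagonal_ofReal, diagonal_mul_diagonal, mul_zero, sub_zero,
      trace_diagonal]
    push_cast [Complex.coe_algebraMap, Fin.sum_univ_three, d, hlog₁]
    ring
  have hD₂ : ((1 : Matrix (Fin 3) (Fin 3) ℂ) * cfc Real.log (1 : Matrix (Fin 3) (Fin 3) ℂ)
      - 1 * cfc Real.log ρ).trace / 3 = ((1 / 3 * Real.log (32 / 27) : ℝ) : ℂ) := by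
    rw [cfc_log_one, hρd, cfc_diagonal_ofReal, mul_zero, one_mul, zero_sub, trace_neg,
      trace_diagonal]
    push_cast [Complex.coe_algebraMap, Fin.sum_univ_three, d, hlog₂]
    ring
  have hFisher := congrArg (· / 3) (trace_sub_one_mul_cfc_log ρ)
  simp only [add_div] at hFisher
  have hlt := Real.third_log_32_div_27_lt_half_log_9_div_8
  refine ⟨?_, hlt, hFisher, ?_⟩
  · rw [hD₁, hD₂]
    exact_mod_cast hlt
  · rw [hFisher, hD₁, hD₂]
    norm_cast
    linarith
end

section
/- The 4×4 diagonal matrix ρ = diag(5/2, 1/2, 1/2, 1/2), which is a density for the normalized trace τ = Tr/4 on M₄(ℂ), satisfies D(1‖ρ) < D(ρ‖1), where D(a‖b) := τ(a·log a − a·log b); explicitly, (1/4)·log(2/5) + (3/4)·log 2 < (5/8)·log(5/2) + (3/8)·log(1/2). Consequently τ((ρ − 1)·log ρ) = D(ρ‖1) + D(1‖ρ) < 2·D(ρ‖1). -/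
open scoped ComplexOrder

section Aux

lemma aux_scalar_ineq :
    (1 / 4 : ℝ) * Real.log (2 / 5) + (3 / 4 : ℝ) * Real.log 2 <
      (5 / 8 : ℝ) * Real.log (5 / 2) + (3 / 8 : ℝ) * Real.log (1 / 2) := by
  have h : Real.log ((2:ℝ)^16) < Real.log ((5:ℝ)^7) :=
    Real.log_lt_log (by positivity) (by norm_num)
  rw [Real.log_pow, Real.log_pow] at h
  have h25 : Real.log (2/5 : ℝ) = Real.log 2 - Real.log 5 := Real.log_div (by norm_num) (by norm_num)
  have h52 : Real.log (5/2 : ℝ) = Real.log 5 - Real.log 2 := Real.log_div (by norm_num) (by norm_num)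
  have h12 : Real.log (1/2 : ℝ) = - Real.log 2 := by
    rw [one_div, Real.log_inv]
  push_cast at h
  nlinarith [h]

end Aux

/-- Section 4.4: the density `ρ = diag(5/2, 1/2, 1/2, 1/2)` for the normalized trace
`τ = Tr/4` on `M₄(ℂ)` satisfies `D(1‖ρ) < D(ρ‖1)` where
`D(a‖b) = τ(a·log a - a·log b)`; explicitly
`(1/4)·log(2/5) + (3/4)·log 2 < (5/8)·log(5/2) + (3/8)·log(1/2)`.
Consequently `τ((ρ - 1)·log ρ) = D(ρ‖1) + D(1‖ρ) < 2·D(ρ‖1)`, showing that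
`MLSI((I-τ₂)⊗id_{M₂}) < 1`. -/
theorem depolarizing_M2_tensor_counterexample :
    ∀ ρ : Matrix (Fin 4) (Fin 4) ℂ,
      ρ = Matrix.diagonal ![5/2, 1/2, 1/2, 1/2] →
      (((1 : Matrix (Fin 4) (Fin 4) ℂ) * cfc Real.log (1 : Matrix (Fin 4) (Fin 4) ℂ)
          - 1 * cfc Real.log ρ).trace / 4 <
        (ρ * cfc Real.log ρ - ρ * cfc Real.log (1 : Matrix (Fin 4) (Fin 4) ℂ)).trace / 4) ∧
      ((1 / 4 : ℝ) * Real.log (2 / 5) + (3 / 4 : ℝ) * Real.log 2 <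
        (5 / 8 : ℝ) * Real.log (5 / 2) + (3 / 8 : ℝ) * Real.log (1 / 2)) ∧
      (((ρ - 1) * cfc Real.log ρ).trace / 4 =
        (ρ * cfc Real.log ρ - ρ * cfc Real.log (1 : Matrix (Fin 4) (Fin 4) ℂ)).trace / 4
        + ((1 : Matrix (Fin 4) (Fin 4) ℂ) * cfc Real.log (1 : Matrix (Fin 4) (Fin 4) ℂ)
            - 1 * cfc Real.log ρ).trace / 4) ∧
      (((ρ - 1) * cfc Real.log ρ).trace / 4 <
        2 * ((ρ * cfc Real.log ρ
          - ρ * cfc Real.log (1 : Matrix (Fin 4) (Fin 4) ℂ)).trace / 4)) := by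
  intro ρ hρ
  subst hρ
  set v : Fin 4 → ℂ := ![5/2, 1/2, 1/2, 1/2] with hv
  -- selfadjointness
  have hvstar : star v = v := by
    ext i
    fin_cases i <;> simp [hv]
  have hsa : IsSelfAdjoint (Matrix.diagonal v) := by
    rw [IsSelfAdjoint, Matrix.star_eq_conjTranspose, Matrix.diagonal_conjTranspose, hvstar]
  -- log of 1 is 0
  have hone : cfc Real.log (1 : Matrix (Fin 4) (Fin 4) ℂ) = 0 := by
    rw [cfc_apply_one, Real.log_one, map_zero]
  -- the spectrum
  set L1 : ℝ := Real.log (1/2) with hL1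
  set L5 : ℝ := Real.log (5/2) with hL5
  set d : ℝ := (L5 - L1) / 2 with hd
  set c : ℝ := L1 - d / 2 with hc
  have hspec : spectrum ℝ (Matrix.diagonal v) ⊆ {1/2, 5/2} := by
    intro x hx
    have hx' : (x : ℂ) ∈ spectrum ℂ (Matrix.diagonal v) := by
      rw [← spectrum.preimage_algebraMap (R := ℝ) (S := ℂ)] at hx
      exact hx
    rw [spectrum_diagonal] at hx'
    have hx2 : x = 5/2 ∨ x = 2⁻¹ := by
      obtain ⟨i, hi⟩ := hx'
      fin_cases i <;> simp [hv] at hi <;>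
        first
          | (left; exact Complex.ofReal_inj.mp (by push_cast; exact hi.symm))
          | (right; exact Complex.ofReal_inj.mp (by push_cast; exact hi.symm))
    simp only [Set.mem_insert_iff, Set.mem_singleton_iff]
    rcases hx2 with h | h <;> subst h <;> norm_num
  -- compute cfc log ρ
  have hlog : cfc Real.log (Matrix.diagonal v)
      = algebraMap ℝ (Matrix (Fin 4) (Fin 4) ℂ) c + d • (Matrix.diagonal v) := by
    have hcongr : (spectrum ℝ (Matrix.diagonal v)).EqOn Real.log (fun x => c + d * x) := by
      intro x hx
      have hx2 := hspec hx
      simp only [Set.mem_insert_iff, Set.mem_singleton_iff] at hx2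
      show Real.log x = c + d * x
      rcases hx2 with h | h <;> subst h <;> simp only [hc, hd, hL1, hL5] <;> ring
    rw [cfc_congr hcongr]
    rw [cfc_const_add c (fun x => d * x) _ (by fun_prop) hsa,
      show (fun x : ℝ => d * x) = (d * ·) from rfl, cfc_const_mul_id d _ hsa]
  -- trace computations
  have htrX : (cfc Real.log (Matrix.diagonal v)).trace = ((4*c + 4*d : ℝ) : ℂ) := by
    rw [hlog]
    simp [Matrix.algebraMap_eq_diagonal, Matrix.trace_diagonal, Fin.sum_univ_four, hv]
    ring
  have htrρX : ((Matrix.diagonal v) * cfc Real.log (Matrix.diagonal v)).trace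
      = ((4*c + 7*d : ℝ) : ℂ) := by
    rw [hlog, mul_add]
    simp [Matrix.algebraMap_eq_diagonal, Matrix.diagonal_mul_diagonal, Matrix.mul_smul,
      Matrix.trace_diagonal, Fin.sum_univ_four, hv]
    ring
  -- the basic real inequality
  have hbase : -((4*c + 4*d)/4) < (4*c + 7*d)/4 := by
    have h1 := aux_scalar_ineq
    have h2 : Real.log (2/5 : ℝ) = -L5 := by
      rw [show (2/5 : ℝ) = (5/2 : ℝ)⁻¹ by norm_num, Real.log_inv, hL5]
    have h3 : L1 = -Real.log 2 := by
      rw [hL1, one_div, Real.log_inv]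
    rw [h2, ← hL5, ← hL1] at h1
    rw [hc, hd]
    linarith
  constructor
  · rw [hone]
    simp only [mul_zero, one_mul, zero_sub, sub_zero, Matrix.trace_neg, htrX, htrρX]
    rw [show -(((4*c + 4*d : ℝ) : ℂ)) / 4 = ((-((4*c + 4*d)/4) : ℝ) : ℂ) by push_cast; ring,
      show (((4*c + 7*d : ℝ) : ℂ)) / 4 = (((4*c + 7*d)/4 : ℝ) : ℂ) by push_cast; ring]
    exact Complex.real_lt_real.mpr hbase
  refine ⟨aux_scalar_ineq, ?_, ?_⟩
  · rw [hone]
    simp only [mul_zero, one_mul, zero_sub, sub_zero, Matrix.sub_mul, Matrix.trace_sub,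
      Matrix.trace_neg]
    ring
  · rw [hone]
    simp only [mul_zero, one_mul, zero_sub, sub_zero, Matrix.sub_mul, Matrix.trace_sub,
      Matrix.trace_neg, htrX, htrρX]
    rw [show (((4*c + 7*d : ℝ) : ℂ) - ((4*c + 4*d : ℝ) : ℂ)) / 4
        = ((((4*c + 7*d) - (4*c + 4*d))/4 : ℝ) : ℂ) by push_cast; ring,
      show 2 * ((((4*c + 7*d : ℝ)) : ℂ) / 4) = ((2 * ((4*c + 7*d)/4) : ℝ) : ℂ) by push_cast; ring]
    exact Complex.real_lt_real.mpr (by linarith)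
end

section
/- Let d ≥ 1, let ρ be a positive definite d×d complex matrix with Tr(ρ) = d, let Y ∈ M_d(ℂ), t ≥ 0, and set ρ_t := e^{−t}·ρ + (1−e^{−t})·I. Then ∫₀¹ Tr(Y* ρ^s Y ρ^{1−s}) ds ≤ e^{(1−1/d)t} · ∫₀¹ Tr(Y* ρ_t^s Y ρ_t^{1−s}) ds, where real powers of positive definite matrices are defined by functional calculus. -/
open scoped Matrix ComplexOrder

/-!
Diagonalize `ρ = U diag(λ) U*`. Since `ρ_t` is an affine function of `ρ`, it has the same
eigenvectors and eigenvalues `e^{-t} λ_i + 1 - e^{-t}`, so with `Z = U* Y U` both sides are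
`∑ |Z_ij|² ∫₀¹ a_i^s a_j^{1-s} ds` for the respective eigenvalues `a`. The integrand is monotone
and jointly 1-homogeneous in `(a_i, a_j)`, so it suffices that
`λ ≤ e^{(1-1/d)t} (e^{-t} λ + 1 - e^{-t})` for every eigenvalue; as `0 < λ ≤ Tr ρ = d`, this
reduces to Bernoulli's inequality `e^t ≥ 1 + d (e^{t/d} - 1)`.
-/

theorem Real.le_exp_mul_depolarize {d t x : ℝ} (hd : 1 ≤ d) (ht : 0 ≤ t) (hx : x ≤ d) :
    x ≤ Real.exp ((1 - 1 / d) * t) * (Real.exp (-t) * x + (1 - Real.exp (-t))) := by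
  set u := Real.exp (t / d)
  have hu : 1 ≤ u := Real.one_le_exp (div_nonneg ht (by linarith))
  have bernoulli : 1 + d * (u - 1) ≤ Real.exp t := by
    have h := one_add_mul_self_le_rpow_one_add (s := u - 1) (by linarith) hd
    rwa [add_sub_cancel, ← Real.exp_mul, div_mul_cancel₀ _ (by positivity)] at h
  have hexp : Real.exp ((1 - 1 / d) * t) * Real.exp (-t) = u⁻¹ := by
    rw [← Real.exp_add, ← Real.exp_neg]; ring_nf
  calc x ≤ u⁻¹ * (x + Real.exp t - 1) := by
        rw [← div_eq_inv_mul, le_div_iff₀ (by positivity)]; nlinarith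
    _ = _ := by
        rw [← hexp, mul_assoc]; congr 1; rw [Real.exp_neg]; field_simp; ring

theorem Real.rpow_mul_rpow_one_sub_le {a b a' b' M s : ℝ} (ha : 0 ≤ a) (hb : 0 ≤ b)
    (ha' : 0 ≤ a') (hb' : 0 ≤ b') (hM : 0 ≤ M) (haa' : a ≤ M * a') (hbb' : b ≤ M * b')
    (hs₀ : 0 ≤ s) (hs₁ : s ≤ 1) :
    a ^ s * b ^ (1 - s) ≤ M * (a' ^ s * b' ^ (1 - s)) :=
  calc a ^ s * b ^ (1 - s) ≤ (M * a') ^ s * (M * b') ^ (1 - s) := by gcongr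
    _ = M * (a' ^ s * b' ^ (1 - s)) := by
        rw [Real.mul_rpow hM ha', Real.mul_rpow hM hb', mul_mul_mul_comm,
          ← Real.rpow_add' hM (by norm_num), add_sub_cancel, Real.rpow_one]

theorem integral_sum_rpow_mul_rpow_one_sub_le {ι : Type*} [Fintype ι] {w : ι → ι → ℝ}
    {lam μ : ι → ℝ} {M : ℝ} (hw : ∀ i j, 0 ≤ w i j) (hM : 0 ≤ M) (hlam : ∀ i, 0 < lam i)
    (hle : ∀ i, lam i ≤ M * μ i) :
    ∫ s in (0 : ℝ)..1, ∑ i, ∑ j, w i j * lam i ^ s * lam j ^ (1 - s) ≤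
      M * ∫ s in (0 : ℝ)..1, ∑ i, ∑ j, w i j * μ i ^ s * μ j ^ (1 - s) := by
  have hμ (i : ι) : 0 < μ i := pos_of_mul_pos_right ((hlam i).trans_le (hle i)) hM
  rw [← intervalIntegral.integral_const_mul]
  refine intervalIntegral.integral_mono_on zero_le_one ?_ ?_ fun s ⟨hs₀, hs₁⟩ => ?_
  · apply Continuous.intervalIntegrable
    fun_prop (disch := exact (hlam _).ne')
  · apply Continuous.intervalIntegrable
    fun_prop (disch := exact (hμ _).ne')
  · simp only [Finset.mul_sum]
    refine Finset.sum_le_sum fun i _ => Finset.sum_le_sum fun j _ => ?_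
    simpa only [mul_assoc, mul_left_comm M] using mul_le_mul_of_nonneg_left
      (Real.rpow_mul_rpow_one_sub_le (hlam i).le (hlam j).le (hμ i).le (hμ j).le hM (hle i)
        (hle j) hs₀ hs₁) (hw i j)

namespace Matrix

variable {n R : Type*} [Fintype n]

theorem trace_conjTranspose_mul_diagonal_mul_mul_diagonal [DecidableEq n] [CommRing R]
    [StarRing R] (Z : Matrix n n R) (a b : n → R) :
    (Zᴴ * diagonal a * Z * diagonal b).trace = ∑ i, ∑ j, star (Z i j) * a i * Z i j * b j := by
  rw [Finset.sum_comm]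
  refine Finset.sum_congr rfl fun j _ => ?_
  rw [diag_apply, mul_diagonal, mul_apply, Finset.sum_mul]
  simp only [mul_diagonal, conjTranspose_apply]

theorem trace_conjTranspose_mul_conj_mul_mul_conj [CommRing R] [StarRing R]
    (U Y D₁ D₂ : Matrix n n R) :
    (Yᴴ * (U * D₁ * Uᴴ) * Y * (U * D₂ * Uᴴ)).trace =
      ((Uᴴ * Y * U)ᴴ * D₁ * (Uᴴ * Y * U) * D₂).trace := by
  simp only [conjTranspose_mul, conjTranspose_conjTranspose, Matrix.mul_assoc]
  rw [trace_mul_comm Uᴴ]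
  simp only [Matrix.mul_assoc]

variable {𝕜 : Type*} [RCLike 𝕜] [DecidableEq n] {A : Matrix n n 𝕜}

theorem IsHermitian.re_trace_mul_cfc_mul_cfc (hA : A.IsHermitian) (Y : Matrix n n 𝕜)
    (f g : ℝ → ℝ) :
    RCLike.re (Yᴴ * cfc f A * Y * cfc g A).trace =
      ∑ i, ∑ j, ‖((hA.eigenvectorUnitary : Matrix n n 𝕜)ᴴ * Y * hA.eigenvectorUnitary) i j‖ ^ 2 *
        f (hA.eigenvalues i) * g (hA.eigenvalues j) := by
  rw [hA.cfc_eq f, hA.cfc_eq g, IsHermitian.cfc, IsHermitian.cfc, Unitary.conjStarAlgAut_apply,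
    Unitary.conjStarAlgAut_apply, star_eq_conjTranspose, trace_conjTranspose_mul_conj_mul_mul_conj,
    trace_conjTranspose_mul_diagonal_mul_mul_diagonal]
  simp only [map_sum, Function.comp_apply]
  refine Finset.sum_congr rfl fun i _ => Finset.sum_congr rfl fun j _ => ?_
  rw [mul_right_comm (star _), RCLike.star_def, RCLike.conj_mul]
  norm_cast

theorem IsHermitian.cfc_smul_add_smul_one (hA : A.IsHermitian) (c k : ℝ) (f : ℝ → ℝ) :
    cfc f (c • A + k • (1 : Matrix n n 𝕜)) = cfc (fun x => f (c * x + k)) A := by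
  rw [cfc_comp' f (c * · + k) A (Set.Finite.continuousOn (A.finite_real_spectrum.image _) f)
      (by fun_prop) hA.isSelfAdjoint, cfc_add_const k (c * ·) A (by fun_prop) hA.isSelfAdjoint,
    cfc_const_mul_id c A hA.isSelfAdjoint, Algebra.algebraMap_eq_smul_one]

theorem PosSemidef.eigenvalues_le_re_trace (hA : A.PosSemidef) (i : n) :
    hA.isHermitian.eigenvalues i ≤ RCLike.re A.trace := by
  rw [hA.isHermitian.trace_eq_sum_eigenvalues, map_sum]
  simp only [RCLike.ofReal_re]
  exact Finset.single_le_sum (fun j _ => hA.eigenvalues_nonneg j) (Finset.mem_univ i)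

end Matrix

/-- The matrix content of Proposition 3.20: for a density `ρ` for the normalized trace
(`Tr(ρ) = d`), any matrix `Y`, `t ≥ 0` and the depolarizing flow
`ρ_t = e^{-t}ρ + (1-e^{-t})·I`, the weighted L₂-norms satisfy
`∫₀¹ Tr(Y* ρ^s Y ρ^{1-s}) ds ≤ e^{(1-1/d)t} ∫₀¹ Tr(Y* ρ_t^s Y ρ_t^{1-s}) ds`,
real powers being taken by functional calculus (the traces appearing are real, so we
state the inequality for their real parts); this is the `(1/2 + 1/(2d))`-gradient
estimate for the depolarizing semigroup on `M_d`. -/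
theorem depolarizing_Md_gradient_estimate
    (d : ℕ) (hd : 1 ≤ d) (ρ Y : Matrix (Fin d) (Fin d) ℂ)
    (hρ : ρ.PosDef) (hρtr : ρ.trace = (d : ℂ)) (t : ℝ) (ht : 0 ≤ t) :
    ∫ s in (0:ℝ)..1,
        ((Yᴴ * cfc (fun x : ℝ => x ^ s) ρ * Y * cfc (fun x : ℝ => x ^ (1 - s)) ρ).trace).re ≤
      Real.exp ((1 - 1 / (d : ℝ)) * t) *
        ∫ s in (0:ℝ)..1,
          ((Yᴴ * cfc (fun x : ℝ => x ^ s)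
                (Real.exp (-t) • ρ + (1 - Real.exp (-t)) • (1 : Matrix (Fin d) (Fin d) ℂ))
              * Y * cfc (fun x : ℝ => x ^ (1 - s))
                (Real.exp (-t) • ρ
                  + (1 - Real.exp (-t)) • (1 : Matrix (Fin d) (Fin d) ℂ))).trace).re := by
  have hH := hρ.isHermitian
  have heig_le (i : Fin d) : hH.eigenvalues i ≤ d := by
    simpa [hρtr] using hρ.posSemidef.eigenvalues_le_re_trace i
  simp only [hH.cfc_smul_add_smul_one, ← RCLike.re_to_complex, hH.re_trace_mul_cfc_mul_cfc]
  exact integral_sum_rpow_mul_rpow_one_sub_le (fun i j => sq_nonneg _) (Real.exp_pos _).le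
    hρ.eigenvalues_pos fun i => Real.le_exp_mul_depolarize (by exact_mod_cast hd) ht (heig_le i)
end

section
/- Let F(t) := 2·∑_{m=1}^∞ e^{−m²t} for t > 0. Then log 4 ≤ inf{ t > 0 : F(t) ≤ 1/2 } ≤ log 5. -/
private lemma aux_summable {t : ℝ} (ht : 0 < t) :
    Summable (fun m : ℕ => Real.exp (-((m : ℝ) + 1) ^ 2 * t)) := by
  have hlt : Real.exp (-t) < 1 := by
    rw [Real.exp_lt_one_iff]; linarith
  have hge : Summable (fun m : ℕ => Real.exp (-t) ^ (m + 1)) :=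
    ((summable_geometric_of_lt_one (Real.exp_pos _).le hlt).mul_left (Real.exp (-t))).congr
      (by intro m; ring)
  refine Summable.of_nonneg_of_le (fun m => (Real.exp_pos _).le) (fun m => ?_) hge
  rw [← Real.exp_nat_mul]
  apply Real.exp_le_exp.mpr
  push_cast
  nlinarith [mul_nonneg (mul_nonneg (Nat.cast_nonneg (α := ℝ) m)
    (by positivity : (0:ℝ) ≤ (m:ℝ)+1)) ht.le]

private lemma aux_lower {t : ℝ} (ht : 0 < t) :
    Real.exp (-t) ≤ ∑' m : ℕ, Real.exp (-((m : ℝ) + 1) ^ 2 * t) := by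
  have := Summable.le_tsum (aux_summable ht) 0 (fun m _ => (Real.exp_pos _).le)
  simpa using this

private lemma aux_upper {t : ℝ} (ht : 0 < t) :
    (∑' m : ℕ, Real.exp (-((m : ℝ) + 1) ^ 2 * t)) ≤ Real.exp (-t) / (1 - Real.exp (-t)) := by
  have hlt : Real.exp (-t) < 1 := by rw [Real.exp_lt_one_iff]; linarith
  have hgsum : Summable (fun m : ℕ => Real.exp (-t) ^ (m + 1)) :=
    ((summable_geometric_of_lt_one (Real.exp_pos _).le hlt).mul_left (Real.exp (-t))).congr
      (by intro m; ring)
  have hle : ∀ m : ℕ, Real.exp (-((m : ℝ) + 1) ^ 2 * t) ≤ Real.exp (-t) ^ (m + 1) := by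
    intro m
    rw [← Real.exp_nat_mul]
    apply Real.exp_le_exp.mpr
    push_cast
    nlinarith [mul_nonneg (mul_nonneg (Nat.cast_nonneg (α := ℝ) m)
      (by positivity : (0:ℝ) ≤ (m:ℝ)+1)) ht.le]
  calc (∑' m : ℕ, Real.exp (-((m : ℝ) + 1) ^ 2 * t))
      ≤ ∑' m : ℕ, Real.exp (-t) ^ (m + 1) := Summable.tsum_le_tsum hle (aux_summable ht) hgsum
    _ = Real.exp (-t) * ∑' m : ℕ, Real.exp (-t) ^ m := by
        rw [← tsum_mul_left]
        exact tsum_congr (fun m => by rw [pow_succ, mul_comm])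
    _ = Real.exp (-t) / (1 - Real.exp (-t)) := by
        rw [tsum_geometric_of_lt_one (Real.exp_pos _).le hlt, div_eq_mul_inv]

private lemma aux_mem : Real.log 5 ∈ {t : ℝ | 0 < t ∧
    2 * ∑' m : ℕ, Real.exp (-((m : ℝ) + 1) ^ 2 * t) ≤ 1 / 2} := by
  have h5 : (0:ℝ) < 5 := by norm_num
  have ht : 0 < Real.log 5 := Real.log_pos (by norm_num)
  have he : Real.exp (-Real.log 5) = 1 / 5 := by
    rw [Real.exp_neg, Real.exp_log h5]; norm_num
  refine ⟨ht, ?_⟩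
  have h14 : Real.exp (-Real.log 5) / (1 - Real.exp (-Real.log 5)) = 1 / 4 := by
    rw [he]; norm_num
  linarith [aux_upper ht, h14 ▸ aux_upper ht]

/-- The cb-return time estimate of Example 4.6: with
`F(t) = 2·∑_{m=1}^∞ e^{-m²t}` (the `L₁ → L∞` norm of `T_t - E` for the heat semigroup
on the circle), one has `log 4 ≤ inf{t > 0 : F(t) ≤ 1/2} ≤ log 5`. -/
theorem circle_cb_return_time_estimate :
    Real.log 4 ≤ sInf {t : ℝ | 0 < t ∧
        2 * ∑' m : ℕ, Real.exp (-((m : ℝ) + 1) ^ 2 * t) ≤ 1 / 2} ∧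
    sInf {t : ℝ | 0 < t ∧
        2 * ∑' m : ℕ, Real.exp (-((m : ℝ) + 1) ^ 2 * t) ≤ 1 / 2} ≤ Real.log 5 := by
  constructor
  · refine le_csInf ⟨Real.log 5, aux_mem⟩ ?_
    rintro t ⟨ht, hF⟩
    have h1 : Real.exp (-t) ≤ 1 / 4 := by
      have := aux_lower ht; linarith
    have h4 : Real.exp (-t) = Real.exp (-t) := rfl
    have : Real.exp (-t) ≤ Real.exp (Real.log (1/4)) := by
      rw [Real.exp_log (by norm_num : (0:ℝ) < 1/4)]; exact h1
    have hle := Real.exp_le_exp.mp this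
    have : Real.log (1/4) = -Real.log 4 := by
      rw [one_div, Real.log_inv]
    linarith [hle, this ▸ hle]
  · exact csInf_le ⟨0, fun x hx => hx.1.le⟩ aux_mem
end

section
/- Let d ≥ 1 be an integer and let F(t) := 2·∑_{m=1}^∞ e^{−m²t} for t > 0. Then (1 + 1/d)·log 2 ≤ inf{ t > 0 : F(t)^d ≤ 1/2 } ≤ log(2^{1+1/d} + 1). -/
/-!
Comparing `e^{-(m+1)²t}` with `e^{-(m+1)t}` gives `2e^{-t} ≤ F(t) ≤ 2/(e^t - 1)`. The lower
bound makes `F(t)^d ≤ 1/2` impossible for `t < (1 + 1/d) log 2`, and the upper bound gives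
`F(t) ≤ 2^{-1/d}` at `t = log(2^{1+1/d} + 1)`.
-/

open Real

/-- The function `F` of the paper: `‖T_t - E‖_{L₁(𝕋)→L∞(𝕋)}` for the heat semigroup on the circle. -/
noncomputable def circleHeatNorm (t : ℝ) : ℝ :=
  2 * ∑' m : ℕ, exp (-((m : ℝ) + 1) ^ 2 * t)

lemma exp_neg_succ_sq_mul_le {t : ℝ} (ht : 0 ≤ t) (m : ℕ) :
    exp (-((m : ℝ) + 1) ^ 2 * t) ≤ exp (-t) ^ (m + 1) := by
  rw [← exp_nat_mul, exp_le_exp]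
  push_cast
  nlinarith [mul_nonneg (mul_nonneg (Nat.cast_nonneg (α := ℝ) m) (Nat.cast_nonneg m)) ht,
    mul_nonneg (Nat.cast_nonneg (α := ℝ) m) ht]

lemma hasSum_exp_neg_pow_succ {t : ℝ} (ht : 0 < t) :
    HasSum (fun m : ℕ => exp (-t) ^ (m + 1)) (1 / (exp t - 1)) := by
  have hgeom := (hasSum_geometric_of_lt_one (exp_pos (-t)).le
    (exp_lt_one_iff.mpr (neg_neg_of_pos ht))).mul_left (exp (-t))
  have hsum : exp (-t) * (1 - exp (-t))⁻¹ = 1 / (exp t - 1) := by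
    have : 1 < exp t := one_lt_exp_iff.mpr ht
    rw [exp_neg]
    field_simp
  simpa only [pow_succ', hsum] using hgeom

lemma summable_exp_neg_succ_sq_mul {t : ℝ} (ht : 0 < t) :
    Summable (fun m : ℕ => exp (-((m : ℝ) + 1) ^ 2 * t)) :=
  .of_nonneg_of_le (fun _ => (exp_pos _).le) (exp_neg_succ_sq_mul_le ht.le)
    (hasSum_exp_neg_pow_succ ht).summable

lemma two_mul_exp_neg_le_circleHeatNorm {t : ℝ} (ht : 0 < t) :
    2 * exp (-t) ≤ circleHeatNorm t := by
  have h := (summable_exp_neg_succ_sq_mul ht).le_tsum 0 (fun _ _ => (exp_pos _).le)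
  have h0 : exp (-(((0 : ℕ) : ℝ) + 1) ^ 2 * t) = exp (-t) := by norm_num
  rw [circleHeatNorm]
  linarith

lemma circleHeatNorm_le {t : ℝ} (ht : 0 < t) : circleHeatNorm t ≤ 2 / (exp t - 1) := by
  have h := hasSum_le (exp_neg_succ_sq_mul_le ht.le)
    (summable_exp_neg_succ_sq_mul ht).hasSum (hasSum_exp_neg_pow_succ ht)
  rw [circleHeatNorm, div_eq_mul_one_div]
  linarith

lemma le_of_circleHeatNorm_pow_le_half {d : ℕ} (hd : d ≠ 0) {t : ℝ} (ht : 0 < t)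
    (h : circleHeatNorm t ^ d ≤ 1 / 2) : (1 + 1 / (d : ℝ)) * log 2 ≤ t := by
  have hpow : (2 * exp (-t)) ^ d ≤ 1 / 2 :=
    (pow_le_pow_left₀ (by positivity) (two_mul_exp_neg_le_circleHeatNorm ht) d).trans h
  have hlog := log_le_log (by positivity) hpow
  rw [log_pow, log_mul two_ne_zero (exp_pos _).ne', log_exp, one_div, log_inv] at hlog
  have hdpos : (0 : ℝ) < d := by exact_mod_cast Nat.pos_of_ne_zero hd
  have : log 2 / d ≤ t - log 2 := by rw [div_le_iff₀ hdpos]; linarith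
  linarith [show (1 + 1 / (d : ℝ)) * log 2 = log 2 + log 2 / d by ring]

lemma circleHeatNorm_pow_le_half {d : ℕ} (hd : d ≠ 0) :
    circleHeatNorm (log ((2 : ℝ) ^ (1 + 1 / (d : ℝ)) + 1)) ^ d ≤ 1 / 2 := by
  set A : ℝ := (2 : ℝ) ^ (1 + 1 / (d : ℝ))
  have hA : 0 < A := by positivity
  have hAd : A ^ d = 2 ^ (d + 1) := by
    have hdR : (d : ℝ) ≠ 0 := Nat.cast_ne_zero.mpr hd
    rw [← rpow_natCast, ← rpow_mul zero_le_two, ← rpow_natCast]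
    congr 1
    push_cast
    field_simp
  have ht : 0 < log (A + 1) := log_pos (lt_add_of_pos_left 1 hA)
  have hF := circleHeatNorm_le ht
  rw [exp_log (by positivity), add_sub_cancel_right] at hF
  have hF0 := (two_mul_exp_neg_le_circleHeatNorm ht).trans' (by positivity)
  calc circleHeatNorm (log (A + 1)) ^ d ≤ (2 / A) ^ d := pow_le_pow_left₀ hF0 hF d
    _ = 1 / 2 := by rw [div_pow, hAd, pow_succ]; field_simp

/-- The cb-return time estimate of Example 4.7 for the `d`-torus: with
`F(t) = 2·∑_{m=1}^∞ e^{-m²t}`, so that `F(t)^d = ‖T_t - E‖_{L₁(𝕋^d)→L∞(𝕋^d)}`,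
one has `(1 + 1/d)·log 2 ≤ inf{t > 0 : F(t)^d ≤ 1/2} ≤ log(2^{1+1/d} + 1)`. -/
theorem torus_cb_return_time_estimate (d : ℕ) (hd : 1 ≤ d) :
    (1 + 1 / (d : ℝ)) * Real.log 2 ≤ sInf {t : ℝ | 0 < t ∧
        (2 * ∑' m : ℕ, Real.exp (-((m : ℝ) + 1) ^ 2 * t)) ^ d ≤ 1 / 2} ∧
    sInf {t : ℝ | 0 < t ∧
        (2 * ∑' m : ℕ, Real.exp (-((m : ℝ) + 1) ^ 2 * t)) ^ d ≤ 1 / 2} ≤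
      Real.log ((2 : ℝ) ^ (1 + 1 / (d : ℝ)) + 1) := by
  have hd0 : d ≠ 0 := Nat.one_le_iff_ne_zero.mp hd
  change _ ≤ sInf {t | 0 < t ∧ circleHeatNorm t ^ d ≤ 1 / 2} ∧
    sInf {t | 0 < t ∧ circleHeatNorm t ^ d ≤ 1 / 2} ≤ _
  have hlower : ∀ t ∈ {t | 0 < t ∧ circleHeatNorm t ^ d ≤ 1 / 2},
      (1 + 1 / (d : ℝ)) * log 2 ≤ t :=
    fun t ⟨ht, h⟩ => le_of_circleHeatNorm_pow_le_half hd0 ht h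
  have hmem : log ((2 : ℝ) ^ (1 + 1 / (d : ℝ)) + 1) ∈
      {t | 0 < t ∧ circleHeatNorm t ^ d ≤ 1 / 2} :=
    ⟨log_pos (lt_add_of_pos_left 1 (by positivity)), circleHeatNorm_pow_le_half hd0⟩
  exact ⟨le_csInf ⟨_, hmem⟩ hlower, csInf_le ⟨_, hlower⟩ hmem⟩
end

section
/- Let H be a real inner product space, m ≥ 1, and b : {1,…,m} → H. Define the linear map A on M_m(ℂ) by (A x)_{ij} = ‖b(i) − b(j)‖²·x_{ij} (the Schur multiplier of the matrix (‖b(i)−b(j)‖²)_{ij}), and define the gradient form Γ(x,y) := (1/2)·( A(x*)·y + x*·A(y) − A(x*·y) ), where x* is the conjugate transpose. Then for all indices i, j, l, k, the matrix units e_{ij} satisfy Γ(e_{ij}, e_{lk}) = δ_{il}·⟨ b(i) − b(j), b(i) − b(k) ⟩ · e_{jk}; in particular Γ(e_{ij}, e_{lk}) = 0 when i ≠ l. -/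
/-!
A Schur multiplier acts on each matrix unit by a scalar, so `Γ(e_ij, e_lk)` vanishes unless
`i = l`, and for `i = l` it is `½ (‖b j - b i‖² + ‖b i - b k‖² - ‖b j - b k‖²) e_jk`. The
polarization identity turns this coefficient into `⟪b i - b j, b i - b k⟫`.
-/

open scoped Matrix InnerProductSpace

namespace Matrix

variable {m n α : Type*} [DecidableEq m] [DecidableEq n]

theorem hadamard_single [MulZeroClass α] (C : Matrix m n α) (i : m) (j : n) (a : α) :
    C ⊙ single i j a = single i j (C i j * a) := by
  ext p q
  by_cases hp : i = p <;> by_cases hq : j = q <;> simp [hp, hq]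

theorem single_sub [AddGroup α] (i : m) (j : n) (a b : α) :
    single i j (a - b) = single i j a - single i j b := by
  ext p q
  by_cases hp : i = p <;> by_cases hq : j = q <;> simp [hp, hq]

theorem hadamard_gradient_single_single [Fintype n] [CommRing α] [StarRing α]
    (C : Matrix n n α) (i j l k : n) (a c : α) :
    C ⊙ (single i j a)ᴴ * single l k c + (single i j a)ᴴ * (C ⊙ single l k c) -
        C ⊙ ((single i j a)ᴴ * single l k c) =
      if i = l then single j k ((C j i + C i k - C j k) * (star a * c)) else 0 := by
  split_ifs with hil
  · subst hil
    simp only [conjTranspose_single, hadamard_single, single_mul_single_same]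
    rw [← single_add, ← single_sub]
    congr 1
    ring
  · simp [hadamard_single, hil]

end Matrix

theorem real_inner_sub_sub_eq_half_norm_sq {F : Type*} [NormedAddCommGroup F]
    [InnerProductSpace ℝ F] (x y z : F) :
    ⟪x - y, x - z⟫_ℝ = (‖x - y‖ ^ 2 + ‖x - z‖ ^ 2 - ‖y - z‖ ^ 2) / 2 := by
  rw [real_inner_eq_norm_mul_self_add_norm_mul_self_sub_norm_sub_mul_self_div_two,
    sub_sub_sub_cancel_left, norm_sub_rev z y]
  ring

theorem schur_multiplier_gradient_form_general
    {H : Type*} [NormedAddCommGroup H] [InnerProductSpace ℝ H]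
    (m : ℕ) (b : Fin m → H)
    (A : Matrix (Fin m) (Fin m) ℂ → Matrix (Fin m) (Fin m) ℂ)
    (hA : ∀ x i j, A x i j = ((‖b i - b j‖ ^ 2 : ℝ) : ℂ) * x i j)
    (Γ : Matrix (Fin m) (Fin m) ℂ → Matrix (Fin m) (Fin m) ℂ → Matrix (Fin m) (Fin m) ℂ)
    (hΓ : ∀ x y, Γ x y = (1 / 2 : ℂ) • (A xᴴ * y + xᴴ * A y - A (xᴴ * y)))
    (i j l k : Fin m) :
    Γ (Matrix.single i j 1) (Matrix.single l k 1) =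
      (if i = l then ((inner ℝ (b i - b j) (b i - b k) : ℝ) : ℂ) else 0) •
        Matrix.single j k (1 : ℂ) ∧
    (i ≠ l → Γ (Matrix.single i j 1) (Matrix.single l k 1) = 0) := by
  have hA_schur : A = (Matrix.of (fun i j => ((‖b i - b j‖ ^ 2 : ℝ) : ℂ)) ⊙ ·) :=
    funext fun x => Matrix.ext (hA x)
  have hΓ_units : Γ (Matrix.single i j 1) (Matrix.single l k 1) =
      (if i = l then ((inner ℝ (b i - b j) (b i - b k) : ℝ) : ℂ) else 0) •
        Matrix.single j k (1 : ℂ) := by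
    rw [hΓ, hA_schur, Matrix.hadamard_gradient_single_single]
    split_ifs with hil
    · subst hil
      simp only [Matrix.of_apply, star_one, mul_one, Matrix.smul_single, smul_eq_mul]
      rw [real_inner_sub_sub_eq_half_norm_sq, norm_sub_rev (b j) (b i)]
      congr 1
      push_cast
      ring
    · simp
  exact ⟨hΓ_units, fun hil => by rw [hΓ_units, if_neg hil, zero_smul]⟩

/-- The gradient form computation of Section 4.5 for Schur multiplier semigroups: with
generator `(A x)_{ij} = ‖b(i) - b(j)‖²·x_{ij}` and gradient form
`Γ(x,y) = (1/2)(A(x*)y + x*A(y) - A(x*y))`, the matrix units satisfy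
`Γ(e_{ij}, e_{lk}) = δ_{il}·⟨b(i)-b(j), b(i)-b(k)⟩·e_{jk}`; in particular
`Γ(e_{ij}, e_{lk}) = 0` when `i ≠ l`. -/
theorem schur_multiplier_gradient_form
    {H : Type*} [NormedAddCommGroup H] [InnerProductSpace ℝ H]
    (m : ℕ) (hm : 1 ≤ m) (b : Fin m → H)
    (A : Matrix (Fin m) (Fin m) ℂ → Matrix (Fin m) (Fin m) ℂ)
    (hA : ∀ x i j, A x i j = ((‖b i - b j‖ ^ 2 : ℝ) : ℂ) * x i j)
    (Γ : Matrix (Fin m) (Fin m) ℂ → Matrix (Fin m) (Fin m) ℂ → Matrix (Fin m) (Fin m) ℂ)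
    (hΓ : ∀ x y, Γ x y = (1 / 2 : ℂ) • (A xᴴ * y + xᴴ * A y - A (xᴴ * y)))
    (i j l k : Fin m) :
    Γ (Matrix.single i j 1) (Matrix.single l k 1) =
      (if i = l then ((inner ℝ (b i - b j) (b i - b k) : ℝ) : ℂ) else 0) •
        Matrix.single j k (1 : ℂ) ∧
    (i ≠ l → Γ (Matrix.single i j 1) (Matrix.single l k 1) = 0) :=
  schur_multiplier_gradient_form_general m b A hA Γ hΓ i j l k
end

section
/- Let d ≥ 1. For all real numbers x, y with 0 < x ≤ d, 0 < y ≤ d and x ≠ y: (1 − 1/d)·(x − y)/(log x − log y) + (x − y)·(x − y − x·y·(log x − log y)) / ( x·y·(log x − log y)² ) ≥ 0. -/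
lemma depol_aux (d : ℕ) (hd : 1 ≤ d) (x y : ℝ)
    (hx : 0 < x) (hxd : x ≤ d) (hy : 0 < y) (hlt : y < x) :
    (1 - 1 / (d : ℝ)) * (x - y) / (Real.log x - Real.log y)
      + (x - y) * (x - y - x * y * (Real.log x - Real.log y)) /
          (x * y * (Real.log x - Real.log y) ^ 2) ≥ 0 := by
  have hd' : (0:ℝ) < d := by exact_mod_cast Nat.pos_of_ne_zero (by omega)
  set L := Real.log x - Real.log y with hLdef
  have hL : 0 < L := sub_pos.2 (Real.log_lt_log hy hlt)
  have hLx : L = Real.log (x / y) := (Real.log_div hx.ne' hy.ne').symm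
  have h1 : Real.log (x / y) ≤ x / y - 1 :=
    Real.log_le_sub_one_of_pos (by positivity)
  have key : x * y * L ≤ d * (x - y) := by
    have h2 : L ≤ x / y - 1 := hLx ▸ h1
    have h3 : x * y * L ≤ x * y * (x / y - 1) :=
      mul_le_mul_of_nonneg_left h2 (by positivity)
    have h4 : x * y * (x / y - 1) = x * (x - y) := by field_simp
    have h5 : x * (x - y) ≤ (d:ℝ) * (x - y) :=
      mul_le_mul_of_nonneg_right hxd (sub_nonneg.2 hlt.le)
    have h6 : x * y * L ≤ x * (x - y) := h4 ▸ h3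
    linarith
  have heq : (1 - 1 / (d : ℝ)) * (x - y) / L
      + (x - y) * (x - y - x * y * L) / (x * y * L ^ 2)
      = (((d:ℝ) * (x - y) - x * y * L) * (x - y)) / ((d:ℝ) * (x * y * L ^ 2)) := by
    field_simp
    ring
  rw [heq]
  apply div_nonneg
  · nlinarith
  · positivity

/-- The positivity claim from the proof of Proposition 3.20: for `0 < x, y ≤ d`, `x ≠ y`,
`(1 - 1/d)·(x-y)/(log x - log y)
  + (x-y)(x-y-xy(log x - log y))/(xy(log x - log y)²) ≥ 0`. -/
theorem depolarizing_positivity_claim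
    (d : ℕ) (hd : 1 ≤ d) (x y : ℝ)
    (hx : 0 < x) (hxd : x ≤ d) (hy : 0 < y) (hyd : y ≤ d) (hxy : x ≠ y) :
    (1 - 1 / (d : ℝ)) * (x - y) / (Real.log x - Real.log y)
      + (x - y) * (x - y - x * y * (Real.log x - Real.log y)) /
          (x * y * (Real.log x - Real.log y) ^ 2) ≥ 0 := by
  rcases lt_or_gt_of_ne hxy with h | h
  · have := depol_aux d hd y x hy hyd hx h
    have hswap : Real.log y - Real.log x = -(Real.log x - Real.log y) := by ring
    rw [hswap] at this
    calc (0:ℝ) ≤ (1 - 1 / (d : ℝ)) * (y - x) / (-(Real.log x - Real.log y))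
      + (y - x) * (y - x - y * x * (-(Real.log x - Real.log y))) /
          (y * x * (-(Real.log x - Real.log y)) ^ 2) := this
    _ = (1 - 1 / (d : ℝ)) * (x - y) / (Real.log x - Real.log y)
      + (x - y) * (x - y - x * y * (Real.log x - Real.log y)) /
          (x * y * (Real.log x - Real.log y) ^ 2) := by rw [neg_sq, div_neg]; ring
  · exact depol_aux d hd x y hx hxd hy h
end
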